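/- arXiv:2508.03871 — 3 statements merged into one kernel-verified Lean document; each statement's English description precedes it below -/
import Mathlib

section
/- Let I ⊆ ℚ[a,b,c] be the ideal generated by a + c − 3b, a·c − 3b², and b³, and let J ⊆ ℚ[x,y] be the ideal generated by x² + x·y + y² and y³. Then the ℚ-algebra homomorphism ℚ[x,y] → ℚ[a,b,c]/I determined by x ↦ (class of a − b) and y ↦ (class of −b) vanishes on J and induces a ℚ-algebra isomorphism ℚ[x,y]/J ≅ ℚ[a,b,c]/I. -/
open MvPolynomial

/-- Variables: `a = X 0`, `b = X 1`, `c = X 2` in `ℚ[a,b,c]`. -/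
noncomputable def I₀ : Ideal (MvPolynomial (Fin 3) ℚ) :=
  Ideal.span {X 0 + X 2 - 3 * X 1, X 0 * X 2 - 3 * (X 1) ^ 2, (X 1) ^ 3}

/-- Variables: `x = X 0`, `y = X 1` in `ℚ[x,y]`. -/
noncomputable def J₀ : Ideal (MvPolynomial (Fin 2) ℚ) :=
  Ideal.span {(X 0) ^ 2 + X 0 * X 1 + (X 1) ^ 2, (X 1) ^ 3}

/-- The `ℚ`-algebra homomorphism `ℚ[x,y] → ℚ[a,b,c]/I₀` sending
`x ↦ class of a − b` and `y ↦ class of −b`. -/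
noncomputable def φ₀ : MvPolynomial (Fin 2) ℚ →ₐ[ℚ] MvPolynomial (Fin 3) ℚ ⧸ I₀ :=
  aeval ![Ideal.Quotient.mk I₀ (X 0 - X 1), Ideal.Quotient.mk I₀ (-X 1)]

/-!
The substitution `a = x - y`, `b = -y` is invertible, and the relation `a + c = 3b` forces
`c = -x - 2y`. Under it `b³` becomes `-y³` and, modulo `a + c - 3b`, `ac - 3b²` becomes
`-(x² + xy + y²)`. So both substitutions respect the relations, and the induced maps of quotients
are mutually inverse since they are so on generators.
-/

namespace Ideal

variable {R A B : Type*} [CommSemiring R] [Ring A] [Ring B] [Algebra R A] [Algebra R B]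

theorem map_eq_zero_of_mem_span {F : Type*} [FunLike F A B] [RingHomClass F A B] (f : F)
    {S : Set A} (h : ∀ s ∈ S, f s = 0) : ∀ a ∈ span S, f a = 0 :=
  fun _ ha => (span_le (I := RingHom.ker f)).2 h ha

namespace Quotient

variable {I : Ideal A} {J : Ideal B} [I.IsTwoSided] [J.IsTwoSided]

@[simp]
theorem liftₐ_mk (f : A →ₐ[R] B) (hI : ∀ a ∈ I, f a = 0) (a : A) : liftₐ I f hI (mk I a) = f a :=
  rfl

def algEquivOfLiftComp (φ : A →ₐ[R] B ⧸ J) (ψ : B →ₐ[R] A ⧸ I)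
    (hφ : ∀ a ∈ I, φ a = 0) (hψ : ∀ b ∈ J, ψ b = 0)
    (hψφ : (liftₐ J ψ hψ).comp φ = mkₐ R I) (hφψ : (liftₐ I φ hφ).comp ψ = mkₐ R J) :
    (A ⧸ I) ≃ₐ[R] B ⧸ J :=
  AlgEquiv.ofAlgHom (liftₐ I φ hφ) (liftₐ J ψ hψ)
    (algHom_ext R <| by rw [AlgHom.comp_assoc, liftₐ_comp, hφψ, AlgHom.id_comp])
    (algHom_ext R <| by rw [AlgHom.comp_assoc, liftₐ_comp, hψφ, AlgHom.id_comp])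

@[simp]
theorem algEquivOfLiftComp_mk (φ : A →ₐ[R] B ⧸ J) (ψ : B →ₐ[R] A ⧸ I)
    (hφ : ∀ a ∈ I, φ a = 0) (hψ : ∀ b ∈ J, ψ b = 0)
    (hψφ : (liftₐ J ψ hψ).comp φ = mkₐ R I) (hφψ : (liftₐ I φ hφ).comp ψ = mkₐ R J) (a : A) :
    algEquivOfLiftComp φ ψ hφ hψ hψφ hφψ (mk I a) = φ a :=
  rfl

end Quotient

end Ideal

open Ideal.Quotient

theorem I₀_relations :
    mk I₀ (X 0) + mk I₀ (X 2) - 3 * mk I₀ (X 1) = 0 ∧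
    mk I₀ (X 0) * mk I₀ (X 2) - 3 * mk I₀ (X 1) ^ 2 = 0 ∧ mk I₀ (X 1) ^ 3 = 0 := by
  simp only [← map_ofNat (mk I₀), ← map_mul, ← map_add, ← map_sub, ← map_pow, eq_zero_iff_mem]
  exact ⟨Ideal.subset_span (by simp), Ideal.subset_span (by simp), Ideal.subset_span (by simp)⟩

theorem J₀_relations :
    mk J₀ (X 0) ^ 2 + mk J₀ (X 0) * mk J₀ (X 1) + mk J₀ (X 1) ^ 2 = 0 ∧ mk J₀ (X 1) ^ 3 = 0 := by
  simp only [← map_mul, ← map_add, ← map_pow, eq_zero_iff_mem]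
  exact ⟨Ideal.subset_span (by simp), Ideal.subset_span (by simp)⟩

noncomputable def ψ₀ : MvPolynomial (Fin 3) ℚ →ₐ[ℚ] MvPolynomial (Fin 2) ℚ ⧸ J₀ :=
  aeval ![mk J₀ (X 0 - X 1), mk J₀ (-X 1), mk J₀ (-X 0 - 2 * X 1)]

theorem φ₀_vanishes_on_J₀ : ∀ p ∈ J₀, φ₀ p = 0 := by
  obtain ⟨h₁, h₂, h₃⟩ := I₀_relations
  refine Ideal.map_eq_zero_of_mem_span φ₀ ?_
  rintro _ (rfl | rfl) <;> simp [φ₀]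
  · linear_combination mk I₀ (X 0) * h₁ - h₂
  · linear_combination -h₃

theorem ψ₀_vanishes_on_I₀ : ∀ p ∈ I₀, ψ₀ p = 0 := by
  obtain ⟨h₁, h₂⟩ := J₀_relations
  refine Ideal.map_eq_zero_of_mem_span ψ₀ ?_
  rintro _ (rfl | rfl | rfl) <;> simp [ψ₀, map_ofNat]
  · ring
  · linear_combination -h₁
  · linear_combination -h₂

theorem lift_ψ₀_comp_φ₀ : (liftₐ I₀ ψ₀ ψ₀_vanishes_on_I₀).comp φ₀ = mkₐ ℚ J₀ := by
  refine MvPolynomial.algHom_ext fun i => ?_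
  fin_cases i <;> simp [φ₀, ψ₀, map_ofNat, -liftₐ_apply]

theorem lift_φ₀_comp_ψ₀ : (liftₐ J₀ φ₀ φ₀_vanishes_on_J₀).comp ψ₀ = mkₐ ℚ I₀ := by
  obtain ⟨h₁, -, -⟩ := I₀_relations
  refine MvPolynomial.algHom_ext fun i => ?_
  fin_cases i <;> simp [φ₀, ψ₀, map_ofNat, -liftₐ_apply]
  linear_combination -h₁

theorem stmt0 :
    (∀ p ∈ J₀, φ₀ p = 0) ∧
    ∃ e : (MvPolynomial (Fin 2) ℚ ⧸ J₀) ≃ₐ[ℚ] (MvPolynomial (Fin 3) ℚ ⧸ I₀),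
      ∀ p : MvPolynomial (Fin 2) ℚ, e (Ideal.Quotient.mk J₀ p) = φ₀ p :=
  ⟨φ₀_vanishes_on_J₀, algEquivOfLiftComp φ₀ ψ₀ φ₀_vanishes_on_J₀ ψ₀_vanishes_on_I₀
    lift_ψ₀_comp_φ₀ lift_φ₀_comp_ψ₀, algEquivOfLiftComp_mk _ _ _ _ _ _⟩
end

section
/- The triple (a + c − 3b, a·c − 3b², b³) is a regular sequence in the polynomial ring ℚ[a,b,c]. -/
/-!
With `a, b, c = X 0, X 1, X 2`, substituting `a = 3b - c` identifies `ℚ[a,b,c]/(f₁)` with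
`ℚ[b,c]`, where `f₂` becomes `g = 3bc - c² - 3b² ≠ 0`. Since `b` is prime and does not divide `g`
(as `g(0,c) = -c²`), `b³` is a nonzerodivisor modulo `g`. The ideal `(f₁, f₂, b³)` is proper
because all three generators vanish at the origin.
-/

open MvPolynomial

namespace RingTheory.Sequence

theorem isRegular_self_iff {A : Type*} [CommRing A] (rs : List A) :
    IsRegular A rs ↔
      (∀ i (h : i < rs.length) (p : A),
        rs[i] * p ∈ Ideal.ofList (rs.take i) → p ∈ Ideal.ofList (rs.take i)) ∧
      Ideal.ofList rs ≠ ⊤ := by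
  simp only [isRegular_iff, isWeaklyRegular_iff, Ideal.mul_top,
    isSMulRegular_quotient_iff_mem_of_smul_mem, smul_eq_mul, ne_comm]

end RingTheory.Sequence

namespace MvPolynomial

theorem algHom_sub_mem_of_forall_X {σ R S : Type*} [CommRing R] [CommRing S] [Algebra R S]
    {φ ψ : MvPolynomial σ R →ₐ[R] S} {I : Ideal S} (h : ∀ i, φ (X i) - ψ (X i) ∈ I)
    (p : MvPolynomial σ R) : φ p - ψ p ∈ I := by
  have : (Ideal.Quotient.mkₐ R I).comp φ = (Ideal.Quotient.mkₐ R I).comp ψ :=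
    algHom_ext fun i => by simpa [Ideal.Quotient.eq] using h i
  simpa [Ideal.Quotient.eq] using congr($this p)

end MvPolynomial

noncomputable section

namespace Biquotient

abbrev R : Type := MvPolynomial (Fin 3) ℚ

def f₁ : R := X 0 + X 2 - 3 * X 1

def f₂ : R := X 0 * X 2 - 3 * X 1 ^ 2

def g : R := 3 * X 1 * X 2 - X 2 ^ 2 - 3 * X 1 ^ 2

lemma f₁_ne_zero : f₁ ≠ 0 := by
  intro h
  simpa [f₁] using congr(eval ![1, 0, 0] $h)

/-- The substitution `a ↦ 3b - c`, a retraction of `ℚ[a,b,c]` onto `ℚ[b,c]` with kernel `(f₁)`. -/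
def elim : R →ₐ[ℚ] R := aeval ![3 * X 1 - X 2, X 1, X 2]

lemma elim_f₁ : elim f₁ = 0 := by
  simp [elim, f₁, map_ofNat]

lemma elim_f₂ : elim f₂ = g := by
  simp [elim, f₂, g, map_ofNat]; ring

lemma elim_X_one : elim (X 1) = X 1 := by
  simp [elim]

lemma sub_elim_mem (p : R) : p - elim p ∈ Ideal.span {f₁} := by
  refine algHom_sub_mem_of_forall_X (φ := AlgHom.id ℚ R) (fun i => ?_) p
  rw [Ideal.mem_span_singleton]
  fin_cases i
  · exact ⟨1, by simp [elim, f₁]; ring⟩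
  all_goals simp [elim]

lemma mem_span_f₁_of_elim_eq_zero {p : R} (hp : elim p = 0) : p ∈ Ideal.span {f₁} := by
  simpa [hp] using sub_elim_mem p

lemma elim_eq_zero_of_mem {p : R} (hp : p ∈ Ideal.span {f₁}) : elim p = 0 := by
  obtain ⟨q, rfl⟩ := Ideal.mem_span_singleton'.mp hp
  simp [elim_f₁]

lemma map_elim_span_f₁_f₂ : (Ideal.span {f₁, f₂}).map elim = Ideal.span {g} := by
  rw [Ideal.map_span, Set.image_pair, elim_f₁, elim_f₂, Ideal.span_insert_zero]

lemma span_g_le : Ideal.span {g} ≤ Ideal.span {f₁, f₂} := by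
  rw [Ideal.span_singleton_le_iff_mem, ← elim_f₂, ← sub_sub_cancel f₂ (elim f₂)]
  exact sub_mem (Ideal.subset_span (by simp))
    (Ideal.span_mono (by simp) (sub_elim_mem f₂))

lemma g_ne_zero : g ≠ 0 := by
  intro h
  simpa [g] using congr(eval ![0, 0, 1] $h)

lemma X_one_not_dvd_g : ¬ (X 1 : R) ∣ g := by
  rintro ⟨q, hq⟩
  simpa [g] using congr(eval ![0, 0, 1] $hq)

lemma g_dvd_of_dvd_X_one_pow_mul {n : ℕ} {p : R} (h : g ∣ X 1 ^ n * p) : g ∣ p :=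
  (X_prime.irreducible.isRelPrime_iff_not_dvd.mpr X_one_not_dvd_g).symm.pow_right
    |>.dvd_of_dvd_mul_left h

lemma mem_span_f₁_of_f₂_mul_mem {p : R} (h : f₂ * p ∈ Ideal.span {f₁}) :
    p ∈ Ideal.span {f₁} := by
  have := elim_eq_zero_of_mem h
  rw [map_mul, elim_f₂, mul_eq_zero] at this
  exact mem_span_f₁_of_elim_eq_zero (this.resolve_left g_ne_zero)

lemma mem_span_f₁_f₂_of_X_one_pow_mul_mem {n : ℕ} {p : R}
    (h : X 1 ^ n * p ∈ Ideal.span {f₁, f₂}) : p ∈ Ideal.span {f₁, f₂} := by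
  have h' := Ideal.mem_map_of_mem elim h
  rw [map_elim_span_f₁_f₂, map_mul, map_pow, elim_X_one, Ideal.mem_span_singleton] at h'
  have hp : elim p ∈ Ideal.span {f₁, f₂} :=
    span_g_le (Ideal.mem_span_singleton.mpr (g_dvd_of_dvd_X_one_pow_mul h'))
  rw [← sub_add_cancel p (elim p)]
  exact add_mem (Ideal.span_mono (by simp) (sub_elim_mem p)) hp

end Biquotient

end

open Biquotient in
/-- Variables: `a = X 0`, `b = X 1`, `c = X 2` in `ℚ[a,b,c]`: the triple
`(a + c − 3b, a·c − 3b², b³)` is a regular sequence. -/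
theorem stmt4 :
    RingTheory.Sequence.IsRegular (MvPolynomial (Fin 3) ℚ)
      [(X 0 : MvPolynomial (Fin 3) ℚ) + X 2 - 3 * X 1,
        X 0 * X 2 - 3 * (X 1) ^ 2, (X 1) ^ 3] := by
  rw [RingTheory.Sequence.isRegular_self_iff]
  refine ⟨fun i hi p => ?_, ?_⟩
  · simp only [List.length_cons, List.length_nil] at hi
    interval_cases i <;>
      simp only [List.take_succ_cons, List.take_zero, Ideal.ofList_cons, Ideal.ofList_nil,
        sup_bot_eq, ← Ideal.span_insert, List.getElem_cons_succ, List.getElem_cons_zero,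
        Submodule.mem_bot, mul_eq_zero]
    · exact fun h => h.resolve_left f₁_ne_zero
    · exact mem_span_f₁_of_f₂_mul_mem
    · exact mem_span_f₁_f₂_of_X_one_pow_mul_mem
  · refine ne_top_of_le_ne_top (RingHom.ker_ne_top (eval 0)) (Ideal.span_le.mpr ?_)
    intro r (hr : r ∈ [_, _, _])
    fin_cases hr <;> simp
end

section
/- Fix a rational number β₃ and a sequence of rational numbers (γ_k)_{k≥2}, and define polynomials B_k ∈ ℚ[b,c] recursively by B₁ = b and B_k = (b − β₃·c)·B_{k−1} + γ_k·c^k for k ≥ 2. Then for every natural number n ≥ 1, the quotient ring ℚ[b,c]/(B_n, c^{n+1}) is a finite-dimensional ℚ-vector space of dimension n·(n+1). -/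
/-!
`B n` is monic of degree `n` in `b` over `ℚ[c]`. Dividing out `c^(n+1)` first, the quotient
becomes `(ℚ[c]/(c^(n+1)))[b]/(B n)`, which is free of rank `n` over the `(n+1)`-dimensional
algebra `ℚ[c]/(c^(n+1))`, so the tower law gives dimension `n(n+1)`.
-/

open Polynomial

namespace Ideal

variable (R : Type*) {A : Type*} [CommSemiring R] [CommRing A] [Algebra R A]

noncomputable def polynomialQuotientAlgEquivQuotientPolynomial (I : Ideal A) :
    (A ⧸ I)[X] ≃ₐ[R] A[X] ⧸ I.map C :=
  AlgEquiv.ofRingEquiv (f := I.polynomialQuotientEquivQuotientPolynomial) fun r => by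
    rw [Polynomial.algebraMap_apply, ← Ideal.Quotient.mk_algebraMap, ← Polynomial.map_C,
      polynomialQuotientEquivQuotientPolynomial_map_mk, ← Ideal.Quotient.mk_algebraMap,
      Polynomial.algebraMap_apply]

end Ideal

namespace Polynomial

noncomputable def quotientSpanCAlgEquivAdjoinRoot (R : Type*) {A : Type*} [CommSemiring R]
    [CommRing A] [Algebra R A] (f : A[X]) (a : A) :
    (A[X] ⧸ Ideal.span {f, C a}) ≃ₐ[R] AdjoinRoot (f.map (Ideal.Quotient.mk (Ideal.span {a}))) :=
  (Ideal.quotientEquivAlgOfEq R (by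
      rw [Ideal.map_span, Set.image_singleton, Ideal.span_insert, sup_comm])).trans <|
    (DoubleQuot.quotQuotEquivQuotSupₐ R _ (Ideal.span {f})).symm.trans <|
      Ideal.quotientEquivAlg _ _ (Ideal.polynomialQuotientAlgEquivQuotientPolynomial R _).symm <| by
        simp only [Ideal.map_span, Set.image_singleton]
        rfl

theorem Monic.mul_X_sub_C_add_C {R : Type*} [CommRing R] [Nontrivial R] {p : R[X]}
    (hp : p.Monic) (a r : R) :
    ((X - C a) * p + C r).Monic ∧ ((X - C a) * p + C r).natDegree = p.natDegree + 1 := by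
  have hmonic : ((X - C a) * p).Monic := (monic_X_sub_C a).mul hp
  have hdeg : ((X - C a) * p).natDegree = p.natDegree + 1 := by
    rw [(monic_X_sub_C a).natDegree_mul hp, natDegree_X_sub_C, add_comm]
  have hlt : (C r).degree < ((X - C a) * p).degree := by
    refine degree_C_le.trans_lt ?_
    rw [degree_eq_natDegree hmonic.ne_zero, hdeg]
    exact_mod_cast Nat.succ_pos _
  exact ⟨hmonic.add_of_left hlt, by rw [natDegree_add_eq_left_of_degree_lt hlt, hdeg]⟩

theorem monic_and_natDegree_eq_of_recurrence {R : Type*} [CommRing R] [Nontrivial R] (a : R)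
    (r : ℕ → R) (B : ℕ → R[X]) (hB1 : B 1 = X)
    (hBk : ∀ k, 2 ≤ k → B k = (X - C a) * B (k - 1) + C (r k)) :
    ∀ n, 1 ≤ n → (B n).Monic ∧ (B n).natDegree = n := by
  intro n hn
  induction n, hn using Nat.le_induction with
  | base => exact hB1 ▸ ⟨monic_X, natDegree_X⟩
  | succ m hm ih =>
    obtain ⟨hmonic, hdeg⟩ := ih
    rw [hBk (m + 1) (by omega), Nat.add_sub_cancel]
    simpa only [hdeg] using hmonic.mul_X_sub_C_add_C a (r (m + 1))

section Field

variable {K : Type*} [Field K] {f : K[X][X]} {g : K[X]}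

theorem finiteDimensional_and_finrank_quotient_span_insert_C (hf : f.Monic) (hg : 0 < g.natDegree) :
    FiniteDimensional K (K[X][X] ⧸ Ideal.span {f, C g}) ∧
      Module.finrank K (K[X][X] ⧸ Ideal.span {f, C g}) = f.natDegree * g.natDegree := by
  let S := K[X] ⧸ Ideal.span {g}
  let T := AdjoinRoot (f.map (Ideal.Quotient.mk (Ideal.span {g})))
  have : Nontrivial S := AdjoinRoot.nontrivial g (natDegree_pos_iff_degree_pos.mp hg).ne'
  let pbS : PowerBasis K S := AdjoinRoot.powerBasis (ne_zero_of_natDegree_gt hg)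
  let pbT : PowerBasis S T := AdjoinRoot.powerBasis' (hf.map _)
  have : Module.Finite K S := pbS.finite
  have : Module.Finite S T := pbT.finite
  have : Module.Free S T := .of_basis pbT.basis
  have : Module.Finite K T := .trans S T
  let e := (quotientSpanCAlgEquivAdjoinRoot K f g).toLinearEquiv
  refine ⟨e.symm.finiteDimensional, ?_⟩
  rw [e.finrank_eq, ← Module.finrank_mul_finrank K S, mul_comm, pbS.finrank, pbT.finrank,
    AdjoinRoot.powerBasis_dim, AdjoinRoot.powerBasis'_dim, hf.natDegree_map]

end Field

end Polynomial

/-- We realize `ℚ[b,c]` as `(ℚ[c])[b]`, i.e. `Polynomial (Polynomial ℚ)`,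
with `b = X` and `c = C X`.  With `B k` defined recursively by `B 1 = b` and
`B k = (b − β₃·c)·B (k−1) + γ k·c^k` for `k ≥ 2`, the quotient ring
`ℚ[b,c]/(B n, c^(n+1))` is an `n·(n+1)`-dimensional `ℚ`-vector space for
every `n ≥ 1`. -/
theorem stmt12 (β₃ : ℚ) (γ : ℕ → ℚ) (B : ℕ → Polynomial (Polynomial ℚ))
    (hB1 : B 1 = X)
    (hBk : ∀ k, 2 ≤ k →
      B k = (X - C (Polynomial.C β₃ * Polynomial.X)) * B (k - 1) +
        C (Polynomial.C (γ k) * Polynomial.X ^ k)) :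
    ∀ n, 1 ≤ n →
      FiniteDimensional ℚ (Polynomial (Polynomial ℚ) ⧸
        Ideal.span {B n, (C Polynomial.X : Polynomial (Polynomial ℚ)) ^ (n + 1)}) ∧
      Module.finrank ℚ (Polynomial (Polynomial ℚ) ⧸
        Ideal.span {B n, (C Polynomial.X : Polynomial (Polynomial ℚ)) ^ (n + 1)})
        = n * (n + 1) := by
  intro n hn
  obtain ⟨hmonic, hdeg⟩ := monic_and_natDegree_eq_of_recurrence _ _ B hB1 hBk n hn
  have key := finiteDimensional_and_finrank_quotient_span_insert_C hmonic
    (g := Polynomial.X ^ (n + 1)) (by rw [natDegree_X_pow]; omega)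
  rw [natDegree_X_pow, hdeg] at key
  rwa [← map_pow]
end
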